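/- arXiv:2009.13574 — 2 statements merged into one kernel-verified Lean document; each statement's English description precedes it below -/
import Mathlib

section
/- Let S : ℝⁿ → Matrix (Fin m) (Fin m) ℝ be a symmetric matrix polynomial, homogeneous of degree d, such that all coefficient matrices C_ξ in the expansion S(λ)·(Σᵢλᵢ)^k = Σ_{ξ} C_ξ λ^ξ are positive semidefinite for some k ∈ ℕ. Then S(λ²)·‖λ‖₂^{2k} is a sum of squares of matrix polynomials. -/
/-!
Write `P = (∑ᵢ λᵢ)ᵏ • S = ∑_ξ C_ξ λ^ξ`. Each `C_ξ` is positive semidefinite, so `C_ξ = D_ξᵀ D_ξ`.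
The substitution `λ ↦ λ²` (that is, `expand 2`) turns `λ^ξ` into `(λ^ξ)²`, hence
`P(λ²) = ∑_ξ (λ^ξ D_ξ)ᵀ (λ^ξ D_ξ)`, and `P(λ²) = ‖λ‖₂^{2k} S(λ²)`.
-/

open Matrix MvPolynomial

theorem Matrix.PosSemidef.exists_eq_transpose_mul_self {ι : Type*} [Fintype ι]
    {A : Matrix ι ι ℝ} (hA : A.PosSemidef) : ∃ B : Matrix ι ι ℝ, A = Bᵀ * B := by
  classical
  open scoped MatrixOrder in
  obtain ⟨B, hB⟩ := CStarAlgebra.nonneg_iff_eq_star_mul_self.mp hA.nonneg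
  exact ⟨B, by simpa [star_eq_conjTranspose] using hB⟩

theorem Finset.exists_fin_sum_eq {β M : Type*} [AddCommMonoid M] (T : Finset β) (f : β → M) :
    ∃ (r : ℕ) (g : Fin r → β), ∑ x ∈ T, f x = ∑ s, f (g s) :=
  ⟨T.card, fun s => T.equivFin.symm s,
    (T.sum_coe_sort f).symm.trans (T.equivFin.symm.sum_comp fun x : T => f x).symm⟩

namespace MvPolynomial

variable {σ ι R : Type*} [CommSemiring R] [Fintype ι]

theorem expand_eq_sum_of_support_subset (p : ℕ) {f : MvPolynomial σ R} {T : Finset (σ →₀ ℕ)}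
    (hT : f.support ⊆ T) : expand p f = ∑ ξ ∈ T, monomial (p • ξ) (coeff ξ f) := by
  conv_lhs => rw [f.as_sum]
  rw [map_sum]
  simp_rw [expand_monomial]
  exact Finset.sum_subset hT fun ξ _ hξ => by rw [notMem_support_iff.mp hξ, monomial_zero]

theorem transpose_map_monomial_mul_self (ξ : σ →₀ ℕ) (D : Matrix ι ι R) :
    (D.map (monomial ξ))ᵀ * D.map (monomial ξ) = (Dᵀ * D).map (monomial (2 • ξ)) := by
  ext i j
  simp [Matrix.mul_apply, monomial_mul, two_nsmul, map_sum]

theorem exists_map_expand_two_eq_sum_transpose_mul_self (P : Matrix ι ι (MvPolynomial σ R))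
    (hP : ∀ ξ, ∃ D : Matrix ι ι R, P.map (coeff ξ) = Dᵀ * D) :
    ∃ (r : ℕ) (G : Fin r → Matrix ι ι (MvPolynomial σ R)),
      P.map (expand 2) = ∑ s, (G s)ᵀ * G s := by
  classical
  choose D hD using hP
  set T := Finset.univ.biUnion fun ij : ι × ι => (P ij.1 ij.2).support
  have hT : ∀ i j, (P i j).support ⊆ T := fun i j =>
    Finset.subset_biUnion_of_mem (fun ij : ι × ι => (P ij.1 ij.2).support) (Finset.mem_univ (i, j))
  obtain ⟨r, g, hg⟩ :=
    T.exists_fin_sum_eq fun ξ => ((D ξ).map (monomial ξ))ᵀ * (D ξ).map (monomial ξ)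
  refine ⟨r, fun s => (D (g s)).map (monomial (g s)), Eq.trans ?_ hg⟩
  refine Matrix.ext fun i j => ?_
  rw [map_apply, expand_eq_sum_of_support_subset 2 (hT i j), Matrix.sum_apply]
  refine Finset.sum_congr rfl fun ξ _ => ?_
  rw [transpose_map_monomial_mul_self, ← hD ξ]
  rfl

end MvPolynomial

theorem stmt7_psd_coefficients_give_sos_general (n m k : ℕ)
    (S : Matrix (Fin m) (Fin m) (MvPolynomial (Fin n) ℝ))
    (hcoeff : ∀ ξ : Fin n →₀ ℕ,
      (Matrix.of fun i j =>
        MvPolynomial.coeff ξ ((∑ t : Fin n, MvPolynomial.X t) ^ k * S i j)).PosSemidef) :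
    ∃ (r : ℕ) (G : Fin r → Matrix (Fin m) (Fin m) (MvPolynomial (Fin n) ℝ)),
      (Matrix.of fun i j =>
          (∑ t : Fin n, MvPolynomial.X t ^ 2) ^ k *
            MvPolynomial.aeval (fun t => MvPolynomial.X t ^ 2) (S i j)) =
        ∑ s : Fin r, (G s)ᵀ * G s := by
  set P := Matrix.of fun i j => (∑ t : Fin n, X t) ^ k * S i j
  have hLHS : (Matrix.of fun i j => (∑ t : Fin n, X t ^ 2) ^ k *
      aeval (fun t => X t ^ 2) (S i j)) = P.map (expand 2) := by
    ext i j : 1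
    simp only [P, of_apply, map_apply, map_mul, map_pow, map_sum, expand_X]
    -- `expand 2` is by definition `bind₁ (X · ^ 2) = aeval (X · ^ 2)`
    rfl
  rw [hLHS]
  exact exists_map_expand_two_eq_sum_transpose_mul_self P fun ξ =>
    (hcoeff ξ).exists_eq_transpose_mul_self

/-- necessity construction of Lemma 1: if `S` is a symmetric matrix
polynomial, homogeneous of degree `d`, such that all matrix coefficients of
`S(λ)·(Σᵢλᵢ)^k` are positive semidefinite, then `S(λ²)·‖λ‖₂^{2k}` is a sum of squares
of matrix polynomials. -/
theorem stmt7_psd_coefficients_give_sos (n m d k : ℕ)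
    (S : Matrix (Fin m) (Fin m) (MvPolynomial (Fin n) ℝ))
    (hsym : Sᵀ = S)
    (hhom : ∀ i j, (S i j).IsHomogeneous d)
    (hcoeff : ∀ ξ : Fin n →₀ ℕ,
      (Matrix.of fun i j =>
        MvPolynomial.coeff ξ ((∑ t : Fin n, MvPolynomial.X t) ^ k * S i j)).PosSemidef) :
    ∃ (r : ℕ) (G : Fin r → Matrix (Fin m) (Fin m) (MvPolynomial (Fin n) ℝ)),
      (Matrix.of fun i j =>
          (∑ t : Fin n, MvPolynomial.X t ^ 2) ^ k *
            MvPolynomial.aeval (fun t => MvPolynomial.X t ^ 2) (S i j)) =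
        ∑ s : Fin r, (G s)ᵀ * G s :=
  stmt7_psd_coefficients_give_sos_general n m k S hcoeff
end

section
/- Polya's theorem (scalar case): if p : ℝⁿ → ℝ is a homogeneous polynomial with p(λ) > 0 for all λ in the standard simplex Λ, then there exists k ∈ ℕ such that all coefficients of the polynomial p(λ)·(λ₁ + ⋯ + λₙ)^k are positive. -/
/-!
Write `p = ∑ c_v x^v` and `t = d + k`. Expanding `(x₁ + ⋯ + xₙ)^k` by the multinomial theorem,
the coefficient of `x^ξ` in `(∑ xᵢ)^k p`, for `|ξ| = t`, equals `k! / ∏ ξᵢ!` times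
`∑ c_v ∏ᵢ ξᵢ(ξᵢ - 1)⋯(ξᵢ - vᵢ + 1) = t^d F(1/t, ξ/t)`, where
`F(s, x) = ∑ c_v ∏ᵢ xᵢ(xᵢ - s)⋯(xᵢ - (vᵢ - 1)s)`. Now `F` is continuous with `F(0, ·) = p`,
which is positive on the compact simplex, so `F` is positive on `(-ε, ε) × Λ`. Since `ξ/t ∈ Λ`,
all these coefficients are positive as soon as `1/t < ε`.
-/

open MvPolynomial Finset Filter Topology

open scoped Nat

namespace Finsupp

variable {σ : Type*} [Fintype σ]

theorem multinomial_tsub_mul_prod_factorial {ξ v : σ →₀ ℕ} (h : v ≤ ξ) :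
    (ξ - v).multinomial * ∏ i, (ξ i)! = (ξ - v).degree ! * ∏ i, (ξ i).descFactorial (v i) := by
  have hfac : ∀ i, (ξ i)! = ((ξ - v) i)! * (ξ i).descFactorial (v i) := fun i => by
    rw [tsub_apply, Nat.factorial_mul_descFactorial (h i)]
  rw [multinomial_eq_of_support_subset (subset_univ _), degree_eq_sum, ← Nat.multinomial_spec,
    Finset.prod_congr rfl fun i _ => hfac i, prod_mul_distrib]
  ring

theorem prod_descFactorial_eq_zero_of_not_le {ξ v : σ →₀ ℕ} (h : ¬ v ≤ ξ) :
    ∏ i, (ξ i).descFactorial (v i) = 0 := by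
  obtain ⟨i, hi⟩ := not_forall.mp (mt le_def.mpr h)
  exact prod_eq_zero (mem_univ i) (Nat.descFactorial_eq_zero_iff_lt.mpr (not_le.mp hi))

theorem div_degree_mem_stdSimplex (ξ : σ →₀ ℕ) (h : ξ.degree ≠ 0) :
    (fun i => (ξ i : ℝ) / ξ.degree) ∈ stdSimplex ℝ σ := by
  refine ⟨fun i => by positivity, ?_⟩
  rw [← sum_div, div_eq_one_iff_eq (by exact_mod_cast h), degree_eq_sum, Nat.cast_sum]

end Finsupp

theorem prod_range_div_sub_mul_inv (m l : ℕ) (t : ℝ) :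
    ∏ j ∈ range l, ((m : ℝ) / t - j * t⁻¹) = m.descFactorial l * t⁻¹ ^ l := by
  simp_rw [div_eq_mul_inv, ← sub_mul, prod_mul_distrib, prod_const, card_range,
    ← descPochhammer_eval_eq_prod_range, descPochhammer_eval_eq_descFactorial]

namespace MvPolynomial

theorem IsHomogeneous.degree_eq {σ R : Type*} [CommSemiring R] {p : MvPolynomial σ R} {d : ℕ}
    (hp : p.IsHomogeneous d) {v : σ →₀ ℕ} (hv : v ∈ p.support) : v.degree = d :=
  (hp.degree_eq_sum_deg_support hv).symm

variable {σ : Type*} [Fintype σ]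

theorem IsHomogeneous.coeff_sum_X_pow_mul_mul_prod_factorial {R : Type*} [CommSemiring R]
    {p : MvPolynomial σ R} {d k : ℕ} (hp : p.IsHomogeneous d) {ξ : σ →₀ ℕ}
    (hξ : ξ.degree = d + k) :
    coeff ξ ((∑ i, X i) ^ k * p) * ∏ i, ((ξ i)! : R) =
      k ! * ∑ v ∈ p.support, coeff v p * ∏ i, ((ξ i).descFactorial (v i) : R) := by
  conv_lhs => rw [p.as_sum, mul_sum, coeff_sum, sum_mul]
  rw [mul_sum]
  refine sum_congr rfl fun v hv => ?_
  rw [coeff_mul_monomial']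
  split_ifs with hle
  · have hdeg : (ξ - v).degree = k := by
      have := map_add Finsupp.degree (ξ - v) v
      rw [tsub_add_cancel_of_le hle, hξ, hp.degree_eq hv] at this
      omega
    have key := congrArg (Nat.cast : ℕ → R) (Finsupp.multinomial_tsub_mul_prod_factorial hle)
    push_cast at key
    have hdeg' : ((ξ - v).sum fun _ m => m) = k := hdeg
    rw [coeff_sum_X_pow_of_fintype, if_pos hdeg', mul_right_comm, key, hdeg]
    ring
  · have hzero : ∏ i, ((ξ i).descFactorial (v i) : R) = 0 := by
      rw [← Nat.cast_prod, Finsupp.prod_descFactorial_eq_zero_of_not_le hle, Nat.cast_zero]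
    rw [zero_mul, hzero, mul_zero, mul_zero]

noncomputable def fallingEval (p : MvPolynomial σ ℝ) (s : ℝ) (x : σ → ℝ) : ℝ :=
  ∑ v ∈ p.support, coeff v p * ∏ i, ∏ j ∈ range (v i), (x i - j * s)

theorem fallingEval_zero (p : MvPolynomial σ ℝ) (x : σ → ℝ) : fallingEval p 0 x = eval x p := by
  simp [fallingEval, eval_eq']

theorem continuous_fallingEval (p : MvPolynomial σ ℝ) :
    Continuous fun q : ℝ × (σ → ℝ) => fallingEval p q.1 q.2 := by
  unfold fallingEval
  fun_prop

theorem IsHomogeneous.pow_mul_fallingEval_div {p : MvPolynomial σ ℝ} {d : ℕ}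
    (hp : p.IsHomogeneous d) (ξ : σ → ℕ) {t : ℝ} (ht : t ≠ 0) :
    t ^ d * fallingEval p t⁻¹ (fun i => ξ i / t) =
      ∑ v ∈ p.support, coeff v p * ∏ i, ((ξ i).descFactorial (v i) : ℝ) := by
  rw [fallingEval, mul_sum]
  refine sum_congr rfl fun v hv => ?_
  simp_rw [prod_range_div_sub_mul_inv, prod_mul_distrib, prod_pow_eq_pow_sum,
    ← Finsupp.degree_eq_sum, hp.degree_eq hv]
  have hcancel : t ^ d * t⁻¹ ^ d = 1 := by rw [← mul_pow, mul_inv_cancel₀ ht, one_pow]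
  linear_combination (coeff v p * ∏ i, ((ξ i).descFactorial (v i) : ℝ)) * hcancel

theorem eventually_forall_stdSimplex_fallingEval_pos {p : MvPolynomial σ ℝ}
    (hpos : ∀ x ∈ stdSimplex ℝ σ, 0 < eval x p) :
    ∀ᶠ s in 𝓝 0, ∀ x ∈ stdSimplex ℝ σ, 0 < fallingEval p s x :=
  (isCompact_stdSimplex ℝ σ).eventually_forall_of_forall_eventually fun x hx =>
    continuousAt_const.eventually_lt (continuous_fallingEval p).continuousAt
      (by simpa only [fallingEval_zero] using hpos x hx)

end MvPolynomial

/-- Polya's theorem, scalar case: if `p` is a homogeneous polynomial of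
degree `d` that is strictly positive on the standard simplex, then for some `k ∈ ℕ` all
coefficients (on monomials of degree `d + k`) of `p(λ)·(λ₁ + ⋯ + λₙ)^k` are positive. -/
theorem stmt17_polya (n d : ℕ) (p : MvPolynomial (Fin n) ℝ)
    (hhom : p.IsHomogeneous d)
    (hpos : ∀ lam ∈ stdSimplex ℝ (Fin n), 0 < MvPolynomial.eval lam p) :
    ∃ k : ℕ, ∀ ξ : Fin n →₀ ℕ, (ξ.sum fun _ e => e) = d + k →
      0 < MvPolynomial.coeff ξ ((∑ i : Fin n, MvPolynomial.X i) ^ k * p) := by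
  obtain ⟨k, hk⟩ := eventually_atTop.mp <| tendsto_inv_atTop_nhds_zero_nat.eventually
    (eventually_forall_stdSimplex_fallingEval_pos hpos)
  refine ⟨k + 1, fun ξ hξ => ?_⟩
  change ξ.degree = d + (k + 1) at hξ
  have hdeg : ξ.degree ≠ 0 := by omega
  have hfalling := hk ξ.degree (by omega) _ (ξ.div_degree_mem_stdSimplex hdeg)
  have key := hhom.coeff_sum_X_pow_mul_mul_prod_factorial hξ
  rw [← hhom.pow_mul_fallingEval_div ξ (t := ξ.degree) (by exact_mod_cast hdeg)] at key
  exact pos_of_mul_pos_left (key ▸ by positivity) (by positivity : (0 : ℝ) ≤ ∏ i, ((ξ i)! : ℝ))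
end
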